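/- arXiv:1810.04705 — 4 statements merged into one kernel-verified Lean document; each statement's English description precedes it below -/
import Mathlib

section
/- Let H₁ be a complex normed space and H₂ a complex Hilbert space, let T₁ : H₂ → H₁ be a compact bounded linear operator, let T₂ : H₁ → H₂ be a bounded linear operator, and set N = T₁ ∘ T₂. Let φ ∈ H₁ with φ not in the range of T₁. Then for every sequence (gₙ) in H₁ such that ‖N gₙ − φ‖ → 0 as n → ∞, one has ‖T₂ gₙ‖ → ∞. (This is case 2 of Theorem 1 of the paper in its abstract operator form: if the sampling point z lies outside D, then any approximate solutions g_z^ε of the near-field equation have ‖T^{A→Γ} g_z^ε‖ → ∞ as ε → 0.) -/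
/-!
A bounded operator `T` from a Hilbert space maps every closed ball onto a closed set: by Riesz
representation the ball is weak-* compact (Banach–Alaoglu), `T` is continuous from there into the
weak topology of the target, and weakly compact sets are weakly, hence norm, closed. If
`‖T₂ gₙ‖` did not tend to infinity, then along a subsequence `T₂ gₙ` stays in a ball of radius
`C` while `T₁ (T₂ gₙ) → φ`, so `φ` would lie in the closed set `T₁ '' closedBall 0 C`.
-/

open Filter Metric Topology InnerProductSpace
open scoped InnerProductSpace ComplexConjugate

section

variable {𝕜 H E : Type*} [RCLike 𝕜]
  [NormedAddCommGroup H] [InnerProductSpace 𝕜 H] [CompleteSpace H]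
  [NormedAddCommGroup E] [NormedSpace 𝕜 E]

theorem ContinuousLinearMap.isClosed_image_closedBall (T : H →L[𝕜] E) (x : H) (r : ℝ) :
    IsClosed (T '' closedBall x r) := by
  let F : WeakDual 𝕜 H → WeakSpace 𝕜 E := fun f =>
    toWeakSpace 𝕜 E (T ((toDual 𝕜 H).symm (WeakDual.toStrongDual f)))
  have hF : Continuous F := by
    refine WeakBilin.continuous_of_continuous_eval _ fun ℓ => ?_
    let w := (toDual 𝕜 H).symm (ℓ.comp T)
    have hℓF : ∀ f : WeakDual 𝕜 H, ℓ (F f) = conj (f w) := fun f => by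
      set v := (toDual 𝕜 H).symm (WeakDual.toStrongDual f)
      calc ℓ (T v) = ⟪w, v⟫_𝕜 := (toDual_symm_apply (y := ℓ.comp T)).symm
        _ = conj ⟪v, w⟫_𝕜 := (inner_conj_symm _ _).symm
        _ = conj (f w) := by rw [toDual_symm_apply]; rfl
    exact (RCLike.continuous_conj.comp (WeakDual.eval_continuous w)).congr fun f => (hℓF f).symm
  have hK : IsCompact (F '' (WeakDual.toStrongDual ⁻¹' closedBall (toDual 𝕜 H x) r)) :=
    (WeakDual.isCompact_closedBall _ r).image hF
  have hK_eq : toWeakSpaceCLM 𝕜 E ⁻¹' (F '' (WeakDual.toStrongDual ⁻¹' closedBall (toDual 𝕜 H x) r))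
      = T '' closedBall x r := by
    ext y
    simp only [Set.mem_preimage, Set.mem_image, mem_closedBall, toWeakSpaceCLM_eq_toWeakSpace,
      F, EmbeddingLike.apply_eq_iff_eq]
    constructor
    · rintro ⟨f, hf, rfl⟩
      refine ⟨_, ?_, rfl⟩
      rwa [← (toDual 𝕜 H).dist_map, LinearIsometryEquiv.apply_symm_apply]
    · rintro ⟨v, hv, rfl⟩
      exact ⟨StrongDual.toWeakDual (toDual 𝕜 H v), by simpa using hv, by simp⟩
  rw [← hK_eq]
  exact hK.isClosed.preimage (toWeakSpaceCLM 𝕜 E).continuous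

theorem ContinuousLinearMap.mem_range_of_tendsto_of_frequently_norm_le {ι : Type*} {l : Filter ι}
    (T : H →L[𝕜] E) {y : ι → H} {φ : E} {C : ℝ} (hy : ∃ᶠ n in l, ‖y n‖ ≤ C)
    (hTy : Tendsto (fun n => T (y n)) l (𝓝 φ)) : φ ∈ Set.range T := by
  have hφ : φ ∈ closure (T '' closedBall 0 C) :=
    mem_closure_of_frequently_of_tendsto
      (hy.mono fun n hn => ⟨y n, by simpa using hn, rfl⟩) hTy
  exact Set.image_subset_range _ _ ((T.isClosed_image_closedBall 0 C).closure_subset hφ)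

end

theorem stmt_1_general
    {H₁ H₂ : Type*}
    [NormedAddCommGroup H₁] [NormedSpace ℂ H₁]
    [NormedAddCommGroup H₂] [InnerProductSpace ℂ H₂] [CompleteSpace H₂]
    (T₁ : H₂ →L[ℂ] H₁)
    (T₂ : H₁ →L[ℂ] H₂)
    (N : H₁ →L[ℂ] H₁) (hN : N = T₁.comp T₂)
    (φ : H₁) (hφ : φ ∉ Set.range T₁)
    (g : ℕ → H₁)
    (hg : Filter.Tendsto (fun n => ‖N (g n) - φ‖) Filter.atTop (nhds 0)) :
    Filter.Tendsto (fun n => ‖T₂ (g n)‖) Filter.atTop Filter.atTop := by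
  subst hN
  have hT₁T₂g : Tendsto (fun n => T₁ (T₂ (g n))) atTop (𝓝 φ) :=
    tendsto_iff_norm_sub_tendsto_zero.2 hg
  by_contra hT₂g
  obtain ⟨C, hC⟩ : ∃ C, ∃ᶠ n in atTop, ‖T₂ (g n)‖ < C := by
    simpa only [Filter.tendsto_atTop, not_forall, not_eventually, not_le] using hT₂g
  exact hφ (T₁.mem_range_of_tendsto_of_frequently_norm_le (hC.mono fun _ => le_of_lt) hT₁T₂g)

theorem stmt_1
    {H₁ H₂ : Type*}
    [NormedAddCommGroup H₁] [NormedSpace ℂ H₁]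
    [NormedAddCommGroup H₂] [InnerProductSpace ℂ H₂] [CompleteSpace H₂]
    (T₁ : H₂ →L[ℂ] H₁) (hT₁ : IsCompactOperator T₁)
    (T₂ : H₁ →L[ℂ] H₂)
    (N : H₁ →L[ℂ] H₁) (hN : N = T₁.comp T₂)
    (φ : H₁) (hφ : φ ∉ Set.range T₁)
    (g : ℕ → H₁)
    (hg : Filter.Tendsto (fun n => ‖N (g n) - φ‖) Filter.atTop (nhds 0)) :
    Filter.Tendsto (fun n => ‖T₂ (g n)‖) Filter.atTop Filter.atTop :=
  stmt_1_general T₁ T₂ N hN φ hφ g hg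
end

section
/- Fix k > 0. There exists a constant C > 0, depending only on k, such that for every real λ ≥ 0, |i·β(λ) + √(1+λ)|² · (1+λ) ≤ C. Consequently, for every sequence λ : ℕ → ℝ with λ_j ≥ 0 and every g : ℕ → ℂ, one has the inequality of (possibly infinite) sums ∑_{j=0}^∞ (1+λ_j)^{1/2} · |i·β(λ_j) + √(1+λ_j)|² · |g_j|² ≤ C · ∑_{j=0}^∞ (1+λ_j)^{-1/2} · |g_j|². (This is the smoothing estimate (A14)–(A16) in the proof of Lemma A1, showing that Λ_k − Λ_i maps Ĥ^{-1/2}(L) boundedly into Ĥ^{1/2}(L).) -/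
/-- The mode wavenumber of the waveguide (eq. (1.6) of the paper):
`β(λ) = √(k² − λ)` if `λ ≤ k²` and `β(λ) = i √(λ − k²)` otherwise. -/
noncomputable def modeWavenumber (k lam : ℝ) : ℂ :=
  if lam ≤ k ^ 2 then (Real.sqrt (k ^ 2 - lam) : ℂ)
  else Complex.I * (Real.sqrt (lam - k ^ 2) : ℂ)

/-! For `λ ≤ k²` the vector `iβ + √(1+λ)` has orthogonal components, so its squared norm is
`(k² - λ) + (1 + λ) = 1 + k²`. For `λ > k²` it is the real number `√(1+λ) - √(λ-k²)`, whose
product with `√(1+λ) + √(λ-k²)` is again `1 + k²`, so it decays like `(1+λ)^{-1/2}`.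
In both cases `|iβ + √(1+λ)|² (1+λ) ≤ (1+k²)²`, and the weighted estimate follows termwise. -/

theorem Real.sqrt_sub_sqrt_mul_sqrt_le {b c : ℝ} (hb : 0 ≤ b) (hbc : b ≤ c) :
    (√c - √b) * √c ≤ c - b := by
  have hsub : 0 ≤ √c - √b := sub_nonneg.mpr (Real.sqrt_le_sqrt hbc)
  calc (√c - √b) * √c ≤ (√c - √b) * (√c + √b) :=
        mul_le_mul_of_nonneg_left (le_add_of_nonneg_right (Real.sqrt_nonneg b)) hsub
    _ = √c ^ 2 - √b ^ 2 := by ring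
    _ = c - b := by rw [Real.sq_sqrt (hb.trans hbc), Real.sq_sqrt hb]

theorem norm_I_mul_modeWavenumber_add_sqrt_sq_mul_le (k : ℝ) {lam : ℝ} (hlam : -1 ≤ lam) :
    ‖Complex.I * modeWavenumber k lam + (√(1 + lam) : ℂ)‖ ^ 2 * (1 + lam) ≤ (1 + k ^ 2) ^ 2 := by
  have hsqrt_arg : 0 ≤ 1 + lam := by linarith
  unfold modeWavenumber
  split_ifs with h
  · have hnorm : ‖Complex.I * (√(k ^ 2 - lam) : ℂ) + (√(1 + lam) : ℂ)‖ ^ 2 = 1 + k ^ 2 := by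
      rw [add_comm, mul_comm, Complex.sq_norm, Complex.normSq_add_mul_I, Real.sq_sqrt hsqrt_arg,
        Real.sq_sqrt (sub_nonneg.mpr h)]
      ring
    rw [hnorm, sq (1 + k ^ 2)]
    exact mul_le_mul_of_nonneg_left (add_le_add_right h 1) (by positivity)
  · have hreal : Complex.I * (Complex.I * (√(lam - k ^ 2) : ℂ)) + (√(1 + lam) : ℂ) =
        ((√(1 + lam) - √(lam - k ^ 2) : ℝ) : ℂ) := by
      rw [← mul_assoc, Complex.I_mul_I]
      push_cast
      ring
    have hprod := Real.sqrt_sub_sqrt_mul_sqrt_le (b := lam - k ^ 2) (c := 1 + lam)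
      (by linarith) (by linarith [sq_nonneg k])
    have hsub : 0 ≤ √(1 + lam) - √(lam - k ^ 2) :=
      sub_nonneg.mpr (Real.sqrt_le_sqrt (by linarith [sq_nonneg k]))
    calc _ = ((√(1 + lam) - √(lam - k ^ 2)) * √(1 + lam)) ^ 2 := by
          rw [hreal, Complex.norm_real, Real.norm_eq_abs, sq_abs, mul_pow, Real.sq_sqrt hsqrt_arg]
      _ ≤ (1 + lam - (lam - k ^ 2)) ^ 2 :=
          pow_le_pow_left₀ (mul_nonneg hsub (Real.sqrt_nonneg _)) hprod 2
      _ = (1 + k ^ 2) ^ 2 := by ring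

theorem sqrt_mul_mul_le_mul_inv_sqrt_mul {t x y C : ℝ} (ht : 0 < t) (hy : 0 ≤ y)
    (h : x * t ≤ C) : √t * x * y ≤ C * ((√t)⁻¹ * y) := by
  have hs : 0 < √t := Real.sqrt_pos.mpr ht
  have hsx : √t * x ≤ C * (√t)⁻¹ := by
    have hsq : √t * x * √t = x * t := by rw [mul_right_comm, Real.mul_self_sqrt ht.le, mul_comm]
    rwa [← div_eq_mul_inv, le_div_iff₀ hs, hsq]
  calc √t * x * y ≤ C * (√t)⁻¹ * y := mul_le_mul_of_nonneg_right hsx hy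
    _ = C * ((√t)⁻¹ * y) := mul_assoc _ _ _

theorem ENNReal.tsum_ofReal_le_ofReal_mul_tsum_ofReal {ι : Type*} {f w : ι → ℝ} {C : ℝ}
    (hC : 0 ≤ C) (h : ∀ i, f i ≤ C * w i) :
    ∑' i, ENNReal.ofReal (f i) ≤ ENNReal.ofReal C * ∑' i, ENNReal.ofReal (w i) := by
  rw [← ENNReal.tsum_mul_left]
  exact ENNReal.tsum_le_tsum fun i =>
    (ENNReal.ofReal_le_ofReal (h i)).trans (ENNReal.ofReal_mul hC).le

theorem stmt_6_general (k : ℝ) :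
    ∃ C : ℝ, 0 < C ∧
      (∀ lam : ℝ, 0 ≤ lam →
        ‖Complex.I * modeWavenumber k lam + (Real.sqrt (1 + lam) : ℂ)‖ ^ 2 *
          (1 + lam) ≤ C) ∧
      (∀ lam : ℕ → ℝ, (∀ j, 0 ≤ lam j) → ∀ g : ℕ → ℂ,
        (∑' j : ℕ, ENNReal.ofReal (Real.sqrt (1 + lam j) *
            ‖Complex.I * modeWavenumber k (lam j) +
              (Real.sqrt (1 + lam j) : ℂ)‖ ^ 2 * ‖g j‖ ^ 2)) ≤
          ENNReal.ofReal C *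
            ∑' j : ℕ, ENNReal.ofReal ((Real.sqrt (1 + lam j))⁻¹ * ‖g j‖ ^ 2)) := by
  have hbound : ∀ lam : ℝ, 0 ≤ lam →
      ‖Complex.I * modeWavenumber k lam + (√(1 + lam) : ℂ)‖ ^ 2 * (1 + lam) ≤ (1 + k ^ 2) ^ 2 :=
    fun lam hlam => norm_I_mul_modeWavenumber_add_sqrt_sq_mul_le k (by linarith)
  refine ⟨(1 + k ^ 2) ^ 2, by positivity, hbound, fun lam hlam g => ?_⟩
  exact ENNReal.tsum_ofReal_le_ofReal_mul_tsum_ofReal (by positivity) fun j =>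
    sqrt_mul_mul_le_mul_inv_sqrt_mul (by linarith [hlam j]) (by positivity) (hbound _ (hlam j))

theorem stmt_6 (k : ℝ) (hk : 0 < k) :
    ∃ C : ℝ, 0 < C ∧
      (∀ lam : ℝ, 0 ≤ lam →
        ‖Complex.I * modeWavenumber k lam + (Real.sqrt (1 + lam) : ℂ)‖ ^ 2 *
          (1 + lam) ≤ C) ∧
      (∀ lam : ℕ → ℝ, (∀ j, 0 ≤ lam j) → ∀ g : ℕ → ℂ,
        (∑' j : ℕ, ENNReal.ofReal (Real.sqrt (1 + lam j) *
            ‖Complex.I * modeWavenumber k (lam j) +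
              (Real.sqrt (1 + lam j) : ℂ)‖ ^ 2 * ‖g j‖ ^ 2)) ≤
          ENNReal.ofReal C *
            ∑' j : ℕ, ENNReal.ofReal ((Real.sqrt (1 + lam j))⁻¹ * ‖g j‖ ^ 2)) :=
  stmt_6_general k
end

section
/- Fix k > 0 and a sequence λ : ℕ → ℝ with λ_j ≥ 0 for all j and λ_j → ∞ as j → ∞, and set d_j = (i·β(λ_j) + √(1 + λ_j)) / √(1 + λ_j) ∈ ℂ. Then there exists a continuous linear operator D on the Hilbert space ℓ²(ℕ, ℂ) such that (D v)_j = d_j · v_j for every v ∈ ℓ²(ℕ, ℂ) and every j, and D is a compact operator. (This is the operator-theoretic content of the third claim of Lemma A1: the map Λ_k − Λ_i : Ĥ^{1/2}(L) → Ĥ^{-1/2}(L), conjugated by the isometric identifications of the weighted spaces Ĥ^{±1/2}(L) with ℓ², is the diagonal operator with symbol d_j, and it is compact because d_j → 0.) -/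
open Filter Topology
open scoped ENNReal

theorem isCompactOperator_of_forall_mem_finiteDimensional {𝕜 E F : Type*}
    [NontriviallyNormedField 𝕜] [ProperSpace 𝕜] [NormedAddCommGroup E] [NormedSpace 𝕜 E]
    [NormedAddCommGroup F] [NormedSpace 𝕜 F] (T : E →L[𝕜] F) (V : Submodule 𝕜 F)
    [FiniteDimensional 𝕜 V] (hV : ∀ x, T x ∈ V) : IsCompactOperator T :=
  have : ProperSpace V := FiniteDimensional.proper 𝕜 V
  (isCompactOperator_of_locallyCompactSpace_dom (T.codRestrict V hV)).clm_comp V.subtypeL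

namespace lp

variable {𝕜 ι : Type*} [RCLike 𝕜] {p : ℝ≥0∞}

theorem norm_mul_apply_le (a : lp (fun _ : ι => 𝕜) ∞) (i : ι) (x : 𝕜) :
    ‖a i * x‖ ≤ ‖a‖ * ‖x‖ :=
  (norm_mul_le _ _).trans <|
    mul_le_mul_of_nonneg_right (lp.norm_apply_le_norm ENNReal.top_ne_zero a i) (norm_nonneg x)

theorem memℓp_mul (a : lp (fun _ : ι => 𝕜) ∞) (v : lp (fun _ : ι => 𝕜) p) :
    Memℓp (fun i => a i * v i) p :=
  ((lp.memℓp v).norm.const_mul ‖a‖).mono fun i => norm_mul_apply_le a i (v i)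

noncomputable def indicator (s : Finset ι) (a : lp (fun _ : ι => 𝕜) ∞) :
    lp (fun _ : ι => 𝕜) ∞ :=
  ⟨(s : Set ι).indicator a, (lp.memℓp a).mono' fun i => norm_indicator_le_norm_self a i⟩

@[simp]
theorem coe_indicator (s : Finset ι) (a : lp (fun _ : ι => 𝕜) ∞) :
    ⇑(indicator s a) = (s : Set ι).indicator a :=
  rfl

theorem tendsto_indicator_atTop {a : lp (fun _ : ι => 𝕜) ∞}
    (ha : Tendsto (a : ι → 𝕜) cofinite (𝓝 0)) :
    Tendsto (fun s : Finset ι => indicator s a) atTop (𝓝 a) := by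
  classical
  rw [Metric.tendsto_atTop]
  intro ε hε
  have hsmall : ∀ᶠ i in cofinite, ‖a i‖ < ε / 2 :=
    (tendsto_zero_iff_norm_tendsto_zero.mp ha).eventually (gt_mem_nhds (half_pos hε))
  refine ⟨(eventually_cofinite.mp hsmall).toFinset, fun s hs => ?_⟩
  rw [dist_eq_norm]
  refine (lp.norm_le_of_forall_le (half_pos hε).le fun i => ?_).trans_lt (half_lt_self hε)
  rw [lp.coeFn_sub, Pi.sub_apply, coe_indicator]
  by_cases hi : i ∈ s
  · simpa [Set.indicator_of_mem (Finset.mem_coe.mpr hi)] using (half_pos hε).le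
  · have : ‖a i‖ < ε / 2 := by simpa using mt (@hs i) hi
    simpa [Set.indicator_of_notMem (Finset.mem_coe.not.mpr hi)] using this.le

variable [Fact (1 ≤ p)]

theorem norm_le_mul_norm_of_forall_le {C : ℝ} (hC : 0 ≤ C) {v w : lp (fun _ : ι => 𝕜) p}
    (h : ∀ i, ‖w i‖ ≤ C * ‖v i‖) : ‖w‖ ≤ C * ‖v‖ := by
  have hp : p ≠ 0 := (zero_lt_one.trans_le Fact.out).ne'
  calc ‖w‖ ≤ ‖(C : 𝕜) • v‖ :=
        lp.norm_mono hp fun i => by simpa [norm_smul, abs_of_nonneg hC] using h i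
    _ = C * ‖v‖ := by rw [lp.norm_const_smul hp, RCLike.norm_of_nonneg hC]

variable (𝕜 p) in
noncomputable def diagonal :
    lp (fun _ : ι => 𝕜) ∞ →L[𝕜] lp (fun _ : ι => 𝕜) p →L[𝕜] lp (fun _ : ι => 𝕜) p :=
  LinearMap.mkContinuous₂
    (LinearMap.mk₂ 𝕜 (fun a v => ⟨fun i => a i * v i, memℓp_mul a v⟩)
      (fun _ _ _ => lp.ext <| funext fun _ => add_mul _ _ _)
      (fun _ _ _ => lp.ext <| funext fun _ => mul_assoc _ _ _)
      (fun _ _ _ => lp.ext <| funext fun _ => mul_add _ _ _)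
      (fun _ _ _ => lp.ext <| funext fun _ => mul_left_comm _ _ _))
    1 fun a v => by
      rw [one_mul]
      exact norm_le_mul_norm_of_forall_le (norm_nonneg a) fun i => norm_mul_apply_le a i (v i)

@[simp]
theorem diagonal_apply (a : lp (fun _ : ι => 𝕜) ∞) (v : lp (fun _ : ι => 𝕜) p) (i : ι) :
    diagonal 𝕜 p a v i = a i * v i :=
  rfl

theorem isCompactOperator_diagonal_of_support_subset {a : lp (fun _ : ι => 𝕜) ∞}
    (s : Finset ι) (ha : ∀ i ∉ s, a i = 0) : IsCompactOperator (diagonal 𝕜 p a) := by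
  classical
  let V := Submodule.span 𝕜 ((fun i => lp.single p i (1 : 𝕜)) '' (s : Set ι))
  have : FiniteDimensional 𝕜 V := FiniteDimensional.span_of_finite 𝕜 (s.finite_toSet.image _)
  refine isCompactOperator_of_forall_mem_finiteDimensional _ V fun v => ?_
  have hsum : diagonal 𝕜 p a v = ∑ i ∈ s, (a i * v i) • lp.single p i 1 := by
    ext j
    rw [lp.coeFn_sum, Finset.sum_apply]
    simp only [lp.coeFn_smul, lp.coeFn_single, Pi.smul_apply, Pi.single_apply, smul_eq_mul]
    rw [diagonal_apply, Finset.sum_eq_single j (fun i _ hij => by simp [Ne.symm hij])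
      (fun hj => by simp [ha j hj])]
    simp
  rw [hsum]
  exact Submodule.sum_mem _ fun i hi =>
    Submodule.smul_mem _ _ (Submodule.subset_span ⟨i, hi, rfl⟩)

theorem isCompactOperator_diagonal {a : lp (fun _ : ι => 𝕜) ∞}
    (ha : Tendsto (a : ι → 𝕜) cofinite (𝓝 0)) : IsCompactOperator (diagonal 𝕜 p a) :=
  isCompactOperator_of_tendsto
    (((diagonal 𝕜 p).continuous.tendsto a).comp (tendsto_indicator_atTop ha))
    (Eventually.of_forall fun s => isCompactOperator_diagonal_of_support_subset s
      fun i hi => Set.indicator_of_notMem (by simpa using hi) _)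

end lp

/-- The symbol `d_j = d(λ_j)` of `Λ_k - Λ_i` in the normalised bases of `Ĥ^{±1/2}(L)`. -/
noncomputable def dtnSymbolDiff (k x : ℝ) : ℂ :=
  (Complex.I * modeWavenumber k x + (√(1 + x) : ℂ)) / (√(1 + x) : ℂ)

theorem dtnSymbolDiff_of_lt {k x : ℝ} (h : k ^ 2 < x) :
    dtnSymbolDiff k x = ((√(1 + x) - √(x - k ^ 2)) / √(1 + x) : ℝ) := by
  rw [dtnSymbolDiff, modeWavenumber, if_neg h.not_ge, ← mul_assoc, Complex.I_mul_I]
  push_cast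
  ring

theorem norm_dtnSymbolDiff_le {k x : ℝ} (h : k ^ 2 < x) :
    ‖dtnSymbolDiff k x‖ ≤ (1 + k ^ 2) / (1 + x) := by
  have hx : 0 < 1 + x := by linarith [sq_nonneg k]
  rw [dtnSymbolDiff_of_lt h, Complex.norm_real]
  set s := √(1 + x)
  set t := √(x - k ^ 2)
  have hs : 0 < s := Real.sqrt_pos.mpr hx
  have ht : 0 ≤ t := Real.sqrt_nonneg _
  have hts : t ≤ s := Real.sqrt_le_sqrt (by linarith [sq_nonneg k])
  have hs2 : s ^ 2 = 1 + x := Real.sq_sqrt hx.le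
  have hdiff : (s - t) * (s + t) = 1 + k ^ 2 := by
    calc (s - t) * (s + t) = s ^ 2 - t ^ 2 := by ring
      _ = 1 + k ^ 2 := by rw [hs2, Real.sq_sqrt (by linarith)]; ring
  rw [Real.norm_of_nonneg (div_nonneg (sub_nonneg.2 hts) hs.le),
    div_le_div_iff₀ hs hx, ← hs2, ← hdiff]
  nlinarith [mul_nonneg (mul_nonneg (sub_nonneg.2 hts) hs.le) ht]

theorem tendsto_dtnSymbolDiff_atTop (k : ℝ) : Tendsto (dtnSymbolDiff k) atTop (𝓝 0) := by
  have hdecay : Tendsto (fun x : ℝ => (1 + k ^ 2) / (1 + x)) atTop (𝓝 0) :=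
    tendsto_const_nhds.div_atTop (tendsto_atTop_add_const_left _ 1 tendsto_id)
  refine squeeze_zero_norm' ?_ hdecay
  filter_upwards [eventually_gt_atTop (k ^ 2)] with x hx
  exact norm_dtnSymbolDiff_le hx

theorem stmt_7_general (k : ℝ) (lam : ℕ → ℝ)
    (hlim : Filter.Tendsto lam Filter.atTop Filter.atTop)
    (d : ℕ → ℂ)
    (hd : ∀ j, d j = (Complex.I * modeWavenumber k (lam j) +
      (Real.sqrt (1 + lam j) : ℂ)) / (Real.sqrt (1 + lam j) : ℂ)) :
    ∃ D : lp (fun _ : ℕ => ℂ) 2 →L[ℂ] lp (fun _ : ℕ => ℂ) 2,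
      (∀ (v : lp (fun _ : ℕ => ℂ) 2) (j : ℕ), (D v : ∀ _ : ℕ, ℂ) j = d j * (v : ∀ _ : ℕ, ℂ) j) ∧
      IsCompactOperator D := by
  have hd0 : Tendsto d cofinite (𝓝 0) := by
    rw [funext hd, Nat.cofinite_eq_atTop]
    exact (tendsto_dtnSymbolDiff_atTop k).comp hlim
  let a : lp (fun _ : ℕ => ℂ) ∞ := ⟨d, memℓp_infty hd0.norm.bddAbove_range_of_cofinite⟩
  exact ⟨lp.diagonal ℂ 2 a, fun _ _ => rfl, lp.isCompactOperator_diagonal hd0⟩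

theorem stmt_7 (k : ℝ) (hk : 0 < k) (lam : ℕ → ℝ) (hlam : ∀ j, 0 ≤ lam j)
    (hlim : Filter.Tendsto lam Filter.atTop Filter.atTop)
    (d : ℕ → ℂ)
    (hd : ∀ j, d j = (Complex.I * modeWavenumber k (lam j) +
      (Real.sqrt (1 + lam j) : ℂ)) / (Real.sqrt (1 + lam j) : ℂ)) :
    ∃ D : lp (fun _ : ℕ => ℂ) 2 →L[ℂ] lp (fun _ : ℕ => ℂ) 2,
      (∀ (v : lp (fun _ : ℕ => ℂ) 2) (j : ℕ), (D v : ∀ _ : ℕ, ℂ) j = d j * (v : ∀ _ : ℕ, ℂ) j) ∧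
      IsCompactOperator D :=
  stmt_7_general k lam hlim d hd
end

section
/- Let J ≥ 1 be a natural number and let t : ℕ → ℝ be any sequence. Let T be the real (2J+1)×(2J+1) symmetric Toeplitz matrix with entries T_{p,q} = t(|p − q|) for 0 ≤ p, q ≤ 2J, and let M be the real (J+1)×(J+1) matrix with entries M_{0,0} = t(0), M_{0,l} = M_{l,0} = √2·t(l) for 1 ≤ l ≤ J, and M_{l,l'} = t(|l − l'|) + t(l + l') for 1 ≤ l, l' ≤ J. Suppose τ ∈ ℝ^{2J+1} is an even vector, i.e. τ_{J+l} = τ_{J−l} for 0 ≤ l ≤ J, satisfying T τ = σ τ for some σ ∈ ℝ. Define v ∈ ℝ^{J+1} by v_0 = τ_J/√2 and v_l = τ_{J+l} for 1 ≤ l ≤ J. Then M v = σ v. (This is the correspondence in Section 2.4.1 of the paper between the even eigenvectors/eigenvalues of the prolate Toeplitz matrix T with t(j) = (a/L)·sinc(πja/L) and the eigenvectors/eigenvalues of the Gram matrix M of the partial-aperture problem; the paper's formula v_0 = √2·τ_0 contains a scaling typo — the correct relation, which makes M v = σ v hold, is v_0 = τ_J/√2.) -/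
/-!
Evenness of `τ` folds row `J + l` of `T τ = σ τ` onto the coordinates `τ_J, …, τ_{2J}`: since
`τ_{J-m} = τ_{J+m}`, their coefficients `t |l - m|` and `t (l + m)` add up to `M_{l,m}` for `m ≥ 1`.
Row `0` of `M v = σ v` is then row `J` of `T τ = σ τ` divided by `√2`, and row `l ≥ 1` is row
`J + l` verbatim.
-/

open Finset

theorem Finset.sum_range_two_mul_add_one_eq_add_sum {M : Type*} [AddCommMonoid M] (J : ℕ)
    (f : ℕ → M) :
    ∑ q ∈ range (2 * J + 1), f q = f J + ∑ m ∈ range J, (f (J + (m + 1)) + f (J - (m + 1))) := by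
  rw [show 2 * J + 1 = J + (J + 1) by omega, sum_range_add, sum_range_succ', ← sum_range_reflect,
    sum_add_distrib]
  have hreflect : ∀ m ∈ range J, f (J - 1 - m) = f (J - (m + 1)) := fun m _ => by
    rw [Nat.sub_sub, Nat.add_comm 1 m]
  rw [sum_congr rfl hreflect]
  abel

theorem sum_range_toeplitz_row_of_symm (t x : ℕ → ℝ) {J : ℕ} (l : ℕ)
    (hx : ∀ m ≤ J, x (J - m) = x (J + m)) :
    ∑ q ∈ range (2 * J + 1), t (Nat.dist (J + l) q) * x q =
      t l * x J + ∑ m ∈ range J, (t (Nat.dist l (m + 1)) + t (l + (m + 1))) * x (J + (m + 1)) := by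
  rw [sum_range_two_mul_add_one_eq_add_sum]
  have hdist : Nat.dist (J + l) J = l := by simp [Nat.dist]
  refine congrArg₂ _ (by rw [hdist]) (sum_congr rfl fun m hm => ?_)
  have hm : m < J := mem_range.mp hm
  have hright : Nat.dist (J + l) (J + (m + 1)) = Nat.dist l (m + 1) := by
    simp only [Nat.dist]; omega
  have hleft : Nat.dist (J + l) (J - (m + 1)) = l + (m + 1) := by
    simp only [Nat.dist]; omega
  rw [hright, hleft, hx (m + 1) hm, add_mul]

theorem Nat.add_lt_two_mul_add_one {J l : ℕ} (h : l ≤ J) : J + l < 2 * J + 1 := by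
  omega

theorem toeplitz_mulVec_apply_of_even {J : ℕ} (t : ℕ → ℝ)
    (T : Matrix (Fin (2 * J + 1)) (Fin (2 * J + 1)) ℝ)
    (hT : ∀ p q : Fin (2 * J + 1), T p q = t (Nat.dist (p : ℕ) (q : ℕ)))
    (τ : Fin (2 * J + 1) → ℝ)
    (hτ : ∀ l : ℕ, ∀ h : l ≤ J, τ ⟨J + l, Nat.add_lt_two_mul_add_one h⟩ =
      τ ⟨J - l, (J.sub_le l).trans_lt (Nat.add_lt_two_mul_add_one J.zero_le)⟩)
    (l : ℕ) (hl : l ≤ J) :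
    T.mulVec τ ⟨J + l, Nat.add_lt_two_mul_add_one hl⟩ =
      t l * τ ⟨J, Nat.add_lt_two_mul_add_one J.zero_le⟩ +
      ∑ m : Fin J, (t (Nat.dist l (m + 1)) + t (l + (m + 1))) *
        τ ⟨J + (m + 1), Nat.add_lt_two_mul_add_one m.isLt⟩ := by
  set x : ℕ → ℝ := fun q => if h : q < 2 * J + 1 then τ ⟨q, h⟩ else 0
  have hx : ∀ q (h : q < 2 * J + 1), τ ⟨q, h⟩ = x q := fun q h => by simp only [x, dif_pos h]
  have hx_symm : ∀ m ≤ J, x (J - m) = x (J + m) := fun m hm => by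
    rw [← hx _ (by omega), ← hx _ (by omega), hτ m hm]
  simp only [Matrix.mulVec, dotProduct, hT, hx]
  rw [Fin.sum_univ_eq_sum_range (fun q => t (Nat.dist (J + l) q) * x q),
    Fin.sum_univ_eq_sum_range
      (fun m => (t (Nat.dist l (m + 1)) + t (l + (m + 1))) * x (J + (m + 1)))]
  exact sum_range_toeplitz_row_of_symm t x l hx_symm

theorem stmt_13 (J : ℕ) (t : ℕ → ℝ)
    (T : Matrix (Fin (2 * J + 1)) (Fin (2 * J + 1)) ℝ)
    (hT : ∀ p q : Fin (2 * J + 1), T p q = t (Nat.dist (p : ℕ) (q : ℕ)))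
    (M : Matrix (Fin (J + 1)) (Fin (J + 1)) ℝ)
    (hM00 : M 0 0 = t 0)
    (hM0l : ∀ l : Fin (J + 1), l ≠ 0 → M 0 l = Real.sqrt 2 * t l)
    (hMl0 : ∀ l : Fin (J + 1), l ≠ 0 → M l 0 = Real.sqrt 2 * t l)
    (hMll : ∀ l l' : Fin (J + 1), l ≠ 0 → l' ≠ 0 →
      M l l' = t (Nat.dist (l : ℕ) (l' : ℕ)) + t ((l : ℕ) + (l' : ℕ)))
    (τ : Fin (2 * J + 1) → ℝ)
    (hτeven : ∀ l : ℕ, ∀ h : l ≤ J,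
      τ ⟨J + l, by omega⟩ = τ ⟨J - l, by omega⟩)
    (σ : ℝ) (heig : T.mulVec τ = σ • τ)
    (v : Fin (J + 1) → ℝ)
    (hv0 : v 0 = τ ⟨J, by omega⟩ / Real.sqrt 2)
    (hvl : ∀ l : Fin (J + 1), l ≠ 0 →
      v l = τ ⟨J + (l : ℕ), by have := l.isLt; omega⟩) :
    M.mulVec v = σ • v := by
  have hrow : ∀ l (hl : l ≤ J), σ * τ ⟨J + l, Nat.add_lt_two_mul_add_one hl⟩ =
      t l * τ ⟨J, Nat.add_lt_two_mul_add_one J.zero_le⟩ +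
      ∑ m : Fin J, (t (Nat.dist l (m + 1)) + t (l + (m + 1))) *
        τ ⟨J + (m + 1), Nat.add_lt_two_mul_add_one m.isLt⟩ :=
    fun l hl => (congrFun heig _).symm.trans (toeplitz_mulVec_apply_of_even t T hT τ hτeven l hl)
  ext i
  simp only [Matrix.mulVec, dotProduct, Fin.sum_univ_succ, Pi.smul_apply, smul_eq_mul]
  cases i using Fin.cases with
  | zero =>
    have hrow₀ := hrow 0 (Nat.zero_le J)
    simp only [Nat.dist_zero_left, Nat.zero_add, Nat.add_zero, ← two_mul, mul_assoc,
      ← mul_sum] at hrow₀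
    simp only [hM00, hv0, hM0l _ (Fin.succ_ne_zero _), hvl _ (Fin.succ_ne_zero _), Fin.val_succ,
      mul_assoc, ← mul_sum]
    field_simp
    rw [Real.sq_sqrt zero_le_two]
    linarith
  | succ l =>
    simp only [hMl0 _ (Fin.succ_ne_zero _), hv0, hMll _ _ (Fin.succ_ne_zero _)
      (Fin.succ_ne_zero _), hvl _ (Fin.succ_ne_zero _), Fin.val_succ, hrow (l + 1) l.isLt]
    field_simp
end
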